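/- arXiv:math/0608393 — 2 statements merged into one kernel-verified Lean document; each statement's English description precedes it below -/
import Mathlib

section
/- If the pair (A, b) with A ∈ ℝ^{n×n}, b ∈ ℝ^n is controllable, and one writes (sI − A)^{-1} b = n(s)/d(s) where d(s) = det(sI − A) and n(s) is the vector of cofactor polynomials with n_i(s) = Σ_{j=1}^n n_{ij} s^{j-1}, then the n×n matrix N = (n_{ij}) is invertible. -/
open Matrix Polynomial

namespace NumeratorAuxCtrb

variable {n : ℕ}

/-- The coefficient matrices of the adjugate of the characteristic matrix:
`adj(sI - A) = ∑ j, Bmat A j • s^j` where `Bmat A j = ∑ l, c_{l+j+1} A^l`. -/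
noncomputable def Bmat (A : Matrix (Fin n) (Fin n) ℝ) (j : ℕ) : Matrix (Fin n) (Fin n) ℝ :=
  ∑ l ∈ Finset.range n, A.charpoly.coeff (l + j + 1) • A ^ l

lemma coeff_hi (A : Matrix (Fin n) (Fin n) ℝ) {r : ℕ} (hr : n < r) :
    A.charpoly.coeff r = 0 := by
  apply coeff_eq_zero_of_natDegree_lt
  simpa using hr

lemma coeff_top (A : Matrix (Fin n) (Fin n) ℝ) :
    A.charpoly.coeff n = 1 := by
  have h := A.charpoly_monic
  have hd : A.charpoly.natDegree = n := by simp
  simpa [hd] using h.coeff_natDegree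

lemma mul_Bmat (hn : 0 < n) (A : Matrix (Fin n) (Fin n) ℝ) (j : ℕ) :
    A * Bmat A j = (if j = 0 then 0 else Bmat A (j - 1)) - A.charpoly.coeff j • 1 := by
  obtain ⟨m, rfl⟩ : ∃ m, n = m + 1 := ⟨n - 1, (Nat.succ_pred_eq_of_pos hn).symm⟩
  have hmul : ∀ (c : ℝ) (l : ℕ), A * (c • A ^ l) = c • A ^ (l + 1) := by
    intro c l
    rw [mul_smul_comm, pow_succ']
  rcases j with _ | j
  · -- `A * Bmat A 0 = 0 - c₀ • 1`, via Cayley–Hamilton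
    have hCH : ∑ l ∈ Finset.range (m + 2), A.charpoly.coeff l • A ^ l = 0 := by
      have h := A.aeval_self_charpoly
      rwa [aeval_eq_sum_range' (n := m + 2) (by simp)] at h
    have hsum : A * Bmat A 0 + A.charpoly.coeff 0 • 1 = 0 := by
      rw [Bmat, Finset.mul_sum]
      calc (∑ l ∈ Finset.range (m + 1), A * (A.charpoly.coeff (l + 0 + 1) • A ^ l))
            + A.charpoly.coeff 0 • 1
          = ∑ l ∈ Finset.range (m + 1), A.charpoly.coeff (l + 1) • A ^ (l + 1)
            + A.charpoly.coeff 0 • A ^ 0 := by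
            simp only [hmul, pow_zero, Nat.add_zero]
        _ = ∑ l ∈ Finset.range (m + 2), A.charpoly.coeff l • A ^ l :=
            (Finset.sum_range_succ' (fun l => A.charpoly.coeff l • A ^ l) (m + 1)).symm
        _ = 0 := hCH
    rw [if_pos rfl]
    exact eq_sub_of_add_eq hsum
  · -- `A * Bmat A (j+1) = Bmat A j - c_{j+1} • 1`
    rw [if_neg (Nat.succ_ne_zero j), Nat.add_sub_cancel]
    rw [Bmat, Finset.mul_sum]
    calc (∑ l ∈ Finset.range (m + 1), A * (A.charpoly.coeff (l + (j + 1) + 1) • A ^ l))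
        = ∑ l ∈ Finset.range (m + 1), A.charpoly.coeff (l + j + 2) • A ^ (l + 1) := by
          refine Finset.sum_congr rfl fun l _ => ?_
          rw [hmul]
          congr 2
      _ = ∑ l ∈ Finset.range m, A.charpoly.coeff (l + j + 2) • A ^ (l + 1) := by
          rw [Finset.sum_range_succ]
          rw [coeff_hi A (by omega), zero_smul, add_zero]
      _ = Bmat A j - A.charpoly.coeff (j + 1) • 1 := by
          rw [Bmat, Finset.sum_range_succ' (fun l => A.charpoly.coeff (l + j + 1) • A ^ l) m]
          rw [pow_zero]
          have : (∑ l ∈ Finset.range m, A.charpoly.coeff (l + 1 + j + 1) • A ^ (l + 1))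
              = ∑ l ∈ Finset.range m, A.charpoly.coeff (l + j + 2) • A ^ (l + 1) := by
            refine Finset.sum_congr rfl fun l _ => ?_
            congr 2
            omega
          rw [this]
          simp only [Nat.zero_add, zero_add]
          abel

lemma Bmat_top (hn : 0 < n) (A : Matrix (Fin n) (Fin n) ℝ) :
    Bmat A (n - 1) = 1 := by
  obtain ⟨m, rfl⟩ : ∃ m, n = m + 1 := ⟨n - 1, (Nat.succ_pred_eq_of_pos hn).symm⟩
  simp only [Nat.add_sub_cancel]
  rw [Bmat, Finset.sum_range_succ' (fun l => A.charpoly.coeff (l + m + 1) • A ^ l) m]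
  have h0 : ∀ l ∈ Finset.range m,
      A.charpoly.coeff (l + 1 + m + 1) • A ^ (l + 1) = (0 : Matrix (Fin (m+1)) (Fin (m+1)) ℝ) := by
    intro l _
    rw [coeff_hi A (by omega), zero_smul]
  rw [Finset.sum_congr rfl h0, Finset.sum_const_zero, zero_add, pow_zero]
  have : A.charpoly.coeff (0 + m + 1) = 1 := by
    simpa using coeff_top A
  rw [this, one_smul]

/-- The polynomial (with matrix coefficients) corresponding to the adjugate of the
characteristic matrix. -/
noncomputable def q (A : Matrix (Fin n) (Fin n) ℝ) : (Matrix (Fin n) (Fin n) ℝ)[X] :=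
  ∑ j ∈ Finset.range n, Polynomial.C (Bmat A j) * X ^ j

lemma X_sub_C_mul_q (hn : 0 < n) (A : Matrix (Fin n) (Fin n) ℝ) :
    (X - Polynomial.C A) * q A
      = A.charpoly.map (algebraMap ℝ (Matrix (Fin n) (Fin n) ℝ)) := by
  obtain ⟨m, rfl⟩ : ∃ m, n = m + 1 := ⟨n - 1, (Nat.succ_pred_eq_of_pos hn).symm⟩
  have hXmul : ∀ (M : Matrix (Fin (m+1)) (Fin (m+1)) ℝ) (j : ℕ),
      X * (Polynomial.C M * X ^ j) = Polynomial.C M * X ^ (j + 1) := by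
    intro M j
    rw [← mul_assoc, X_mul_C, mul_assoc, ← pow_succ']
  have hCmul : ∀ (M : Matrix (Fin (m+1)) (Fin (m+1)) ℝ) (j : ℕ),
      Polynomial.C A * (Polynomial.C M * X ^ j) = Polynomial.C (A * M) * X ^ j := by
    intro M j
    rw [← mul_assoc, ← Polynomial.C_mul]
  rw [sub_mul, q, Finset.mul_sum, Finset.mul_sum]
  simp only [hXmul, hCmul]
  have hAB : ∀ j ∈ Finset.range (m + 1),
      Polynomial.C (A * Bmat A j) * X ^ j
        = (if j = 0 then 0 else Polynomial.C (Bmat A (j - 1)) * X ^ j)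
          - Polynomial.C (A.charpoly.coeff j • (1 : Matrix (Fin (m+1)) (Fin (m+1)) ℝ)) * X ^ j := by
    intro j _
    rw [mul_Bmat (Nat.succ_pos m) A j]
    rcases j with _ | j
    · simp [sub_mul]
    · simp only [Nat.succ_ne_zero, if_false, Nat.add_sub_cancel]
      rw [Polynomial.C_sub, sub_mul]
  rw [Finset.sum_congr rfl hAB, Finset.sum_sub_distrib]
  have hsplit :
      (∑ j ∈ Finset.range (m + 1),
        (if j = 0 then 0 else Polynomial.C (Bmat A (j - 1)) * X ^ j))
        = ∑ j ∈ Finset.range m, Polynomial.C (Bmat A j) * X ^ (j + 1) := by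
    rw [Finset.sum_range_succ'
      (fun j => (if j = 0 then (0 : (Matrix (Fin (m+1)) (Fin (m+1)) ℝ)[X])
        else Polynomial.C (Bmat A (j - 1)) * X ^ j)) m]
    simp
  rw [hsplit]
  have hfirst :
      (∑ j ∈ Finset.range (m + 1), Polynomial.C (Bmat A j) * X ^ (j + 1))
        = (∑ j ∈ Finset.range m, Polynomial.C (Bmat A j) * X ^ (j + 1))
          + X ^ (m + 1) := by
    rw [Finset.sum_range_succ]
    have : Bmat A m = 1 := by
      simpa using Bmat_top (Nat.succ_pos m) A
    rw [this, Polynomial.C_1, one_mul]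
  rw [hfirst]
  -- LHS is now `(∑ + X^(m+1)) - (∑ - ∑ C(c j • 1) X^j)`
  have hmap : A.charpoly.map (algebraMap ℝ (Matrix (Fin (m+1)) (Fin (m+1)) ℝ))
      = (∑ j ∈ Finset.range (m + 1),
          Polynomial.C (A.charpoly.coeff j • (1 : Matrix (Fin (m+1)) (Fin (m+1)) ℝ)) * X ^ j)
        + X ^ (m + 1) := by
    have hdeg : A.charpoly.natDegree < m + 2 := by simp
    conv_lhs => rw [A.charpoly.as_sum_range' (m + 2) hdeg]
    rw [Polynomial.map_sum, Finset.sum_range_succ]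
    congr 1
    · refine Finset.sum_congr rfl fun j _ => ?_
      rw [Polynomial.map_monomial, ← Polynomial.C_mul_X_pow_eq_monomial]
      congr 1
      rw [Algebra.algebraMap_eq_smul_one]
    · rw [coeff_top A, Polynomial.map_monomial, _root_.map_one, ← Polynomial.C_mul_X_pow_eq_monomial,
        Polynomial.C_1, one_mul]
  rw [hmap]
  abel

lemma adjugate_charmatrix_eq (hn : 0 < n) (A : Matrix (Fin n) (Fin n) ℝ) :
    (charmatrix A).adjugate = matPolyEquiv.symm (q A) := by
  have h1 : charmatrix A * matPolyEquiv.symm (q A) = A.charpoly • 1 := by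
    apply matPolyEquiv.injective
    rw [_root_.map_mul, AlgEquiv.apply_symm_apply, matPolyEquiv_charmatrix, matPolyEquiv_smul_one]
    exact X_sub_C_mul_q hn A
  have h2 : (charmatrix A).adjugate * charmatrix A = A.charpoly • 1 :=
    adjugate_mul _
  have h3 : A.charpoly • matPolyEquiv.symm (q A) = A.charpoly • (charmatrix A).adjugate := by
    calc A.charpoly • matPolyEquiv.symm (q A)
        = (A.charpoly • 1) * matPolyEquiv.symm (q A) := by rw [smul_mul_assoc, one_mul]
      _ = (charmatrix A).adjugate * (charmatrix A * matPolyEquiv.symm (q A)) := by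
          rw [← h2, mul_assoc]
      _ = (charmatrix A).adjugate * (A.charpoly • 1) := by rw [h1]
      _ = A.charpoly • (charmatrix A).adjugate := by rw [mul_smul_comm, mul_one]
  have hp : A.charpoly ≠ 0 := A.charpoly_monic.ne_zero
  refine Matrix.ext fun i k => ?_
  have h4 := congrFun (congrFun h3 i) k
  simp only [Matrix.smul_apply, smul_eq_mul] at h4
  exact (mul_left_cancel₀ hp h4).symm

lemma adjugate_charmatrix_coeff (hn : 0 < n) (A : Matrix (Fin n) (Fin n) ℝ)
    (i k : Fin n) (j : Fin n) :
    ((charmatrix A).adjugate i k).coeff (j : ℕ) = Bmat A (j : ℕ) i k := by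
  rw [adjugate_charmatrix_eq hn A, matPolyEquiv_symm_apply_coeff]
  rw [q, Polynomial.finset_sum_coeff]
  have hcoeff : ∀ j' ∈ Finset.range n,
      (Polynomial.C (Bmat A j') * X ^ j').coeff (j : ℕ)
        = if (j : ℕ) = j' then Bmat A j' else 0 := by
    intro j' _
    rw [Polynomial.coeff_C_mul_X_pow]
  rw [Finset.sum_congr rfl hcoeff]
  have hj : (j : ℕ) ∈ Finset.range n := Finset.mem_range.mpr j.isLt
  rw [Finset.sum_ite_eq (Finset.range n) (j : ℕ) (fun j' => Bmat A j'), if_pos hj]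

end NumeratorAuxCtrb

open NumeratorAuxCtrb

/-- If `(A, b)` is controllable, the matrix `N` of coefficients of the
numerator polynomials of `(sI − A)⁻¹ b = adj(sI − A) b / det(sI − A)` is invertible.
Here `n i (s) = ∑ j, N i j * s^j` (indices `j = 0, …, n−1`). -/
theorem numerator_coefficient_matrix_full_rank
    {n : ℕ} (hn : 0 < n) (A : Matrix (Fin n) (Fin n) ℝ) (b : Fin n → ℝ)
    (hctrb : (Matrix.of fun (i j : Fin n) => ((A ^ (j : ℕ)) *ᵥ b) i).rank = n)
    (N : Matrix (Fin n) (Fin n) ℝ)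
    (hN : ∀ i j : Fin n,
      N i j = (∑ k : Fin n, (charmatrix A).adjugate i k * Polynomial.C (b k)).coeff j) :
    IsUnit N := by
  classical
  set Ctrb : Matrix (Fin n) (Fin n) ℝ :=
    Matrix.of fun (i j : Fin n) => ((A ^ (j : ℕ)) *ᵥ b) i with hCtrb
  set T : Matrix (Fin n) (Fin n) ℝ :=
    Matrix.of fun (k j : Fin n) => A.charpoly.coeff ((k : ℕ) + (j : ℕ) + 1) with hT
  -- Step 1 : N = Ctrb * T
  have hNeq : N = Ctrb * T := by
    ext i j
    rw [hN, Matrix.mul_apply]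
    rw [Polynomial.finset_sum_coeff]
    have h1 : ∀ k : Fin n,
        ((charmatrix A).adjugate i k * Polynomial.C (b k)).coeff (j : ℕ)
          = Bmat A (j : ℕ) i k * b k := by
      intro k
      rw [Polynomial.coeff_mul_C, adjugate_charmatrix_coeff hn A i k j]
    rw [Finset.sum_congr rfl fun k _ => h1 k]
    have h2 : ∀ k : Fin n, Bmat A (j : ℕ) i k
        = ∑ l ∈ Finset.range n, A.charpoly.coeff (l + (j : ℕ) + 1) * (A ^ l) i k := by
      intro k
      rw [Bmat]
      simp [Matrix.sum_apply]
    calc (∑ k : Fin n, Bmat A (j : ℕ) i k * b k)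
        = ∑ k : Fin n, ∑ l ∈ Finset.range n,
            A.charpoly.coeff (l + (j : ℕ) + 1) * (A ^ l) i k * b k := by
          refine Finset.sum_congr rfl fun k _ => ?_
          rw [h2 k, Finset.sum_mul]
      _ = ∑ l ∈ Finset.range n, ∑ k : Fin n,
            A.charpoly.coeff (l + (j : ℕ) + 1) * (A ^ l) i k * b k := Finset.sum_comm
      _ = ∑ l ∈ Finset.range n, A.charpoly.coeff (l + (j : ℕ) + 1) * ((A ^ l) *ᵥ b) i := by
          refine Finset.sum_congr rfl fun l _ => ?_
          rw [Matrix.mulVec, dotProduct, Finset.mul_sum]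
          refine Finset.sum_congr rfl fun k _ => ?_
          ring
      _ = ∑ l : Fin n, A.charpoly.coeff ((l : ℕ) + (j : ℕ) + 1) * ((A ^ (l : ℕ)) *ᵥ b) i :=
          (Fin.sum_univ_eq_sum_range
            (fun l => A.charpoly.coeff (l + (j : ℕ) + 1) * ((A ^ l) *ᵥ b) i) n).symm
      _ = ∑ k : Fin n, Ctrb i k * T k j := by
          refine Finset.sum_congr rfl fun l _ => ?_
          rw [hCtrb, hT]
          simp [mul_comm]
  -- Step 2: T is invertible (anti-triangular with unit anti-diagonal)
  have hTunit : IsUnit T := by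
    rw [Matrix.isUnit_iff_isUnit_det]
    have hlow : (T.submatrix Fin.revPerm id).BlockTriangular OrderDual.toDual := by
      intro a c hac
      have hac' : (a : ℕ) < (c : ℕ) := hac
      have : n < ((Fin.revPerm a : Fin n) : ℕ) + (c : ℕ) + 1 := by
        simp only [Fin.revPerm_apply, Fin.val_rev]
        omega
      simp only [Matrix.submatrix_apply, id, hT, Matrix.of_apply]
      exact coeff_hi A this
    have hdiag : ∀ a : Fin n, (T.submatrix Fin.revPerm id) a a = 1 := by
      intro a
      have hidx : ((Fin.revPerm a : Fin n) : ℕ) + (a : ℕ) + 1 = n := by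
        simp only [Fin.revPerm_apply, Fin.val_rev]
        omega
      simp only [Matrix.submatrix_apply, id, hT, Matrix.of_apply]
      rw [hidx]
      exact coeff_top A
    have hdet1 : (T.submatrix Fin.revPerm id).det = 1 := by
      rw [Matrix.det_of_lowerTriangular _ hlow]
      exact Finset.prod_eq_one fun a _ => hdiag a
    have hperm := Matrix.det_permute (Fin.revPerm) T
    rw [hdet1] at hperm
    exact IsUnit.of_mul_eq_one _ (by rw [mul_comm]; exact hperm.symm)
  -- Step 3: Ctrb is invertible (full rank)
  have hCunit : IsUnit Ctrb := by
    have hsurj : Function.Surjective Ctrb.mulVecLin := by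
      rw [← LinearMap.range_eq_top]
      apply Submodule.eq_top_of_finrank_eq
      rw [Module.finrank_fin_fun]
      exact hctrb
    have hunit : IsUnit Ctrb.mulVecLin :=
      (LinearMap.isUnit_iff_range_eq_top _).2 (LinearMap.range_eq_top.2 hsurj)
    have heq : Matrix.toLinAlgEquiv' Ctrb = Ctrb.mulVecLin := by
      ext v
      simp [Matrix.toLinAlgEquiv'_apply, Matrix.mulVecLin_apply]
    have : IsUnit (Matrix.toLinAlgEquiv' Ctrb) := heq ▸ hunit
    have h2 := this.map (Matrix.toLinAlgEquiv'.symm : _ ≃ₐ[ℝ] _)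
    simpa using h2
  rw [hNeq]
  exact hCunit.mul hTunit
end

section
/- Let (A, b) be controllable with A Hurwitz. Then there exists c ∈ ℝ^n such that the scalar transfer function c^T (sI − A)^{-1} b has relative degree one (i.e. the numerator polynomial c^T adj(sI − A) b has degree exactly n−1) and all roots of its numerator polynomial have negative real part (minimum phase). -/
/-!
Write `adj(sI − A) = ∑ₖ sᵏ Bₖ`. Comparing coefficients in `(sI − A) adj(sI − A) = χ_A(s) I`
gives `Bₖ = ∑ₘ a_{k+1+m} Aᵐ`, so the vectors `B₀ b, …, B_{n−1} b` are the columns of the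
controllability matrix times a Hankel matrix of coefficients of `χ_A`, which is invertible
because `χ_A` is monic. Under controllability, `c ↦ cᵀ adj(sI − A) b` is therefore onto the
polynomials of degree `< n`, and the numerator can be chosen to be `(s + 1)^(n−1)`.
-/

open Matrix Polynomial

namespace Matrix

section Adjugate

variable {R ι : Type*} [CommRing R] [Fintype ι] [DecidableEq ι] (A : Matrix ι ι R)

theorem charpoly_coeff_eq_zero_of_card_lt {k : ℕ} (hk : Fintype.card ι < k) :
    A.charpoly.coeff k = 0 := by
  nontriviality R
  exact coeff_eq_zero_of_natDegree_lt (by rwa [charpoly_natDegree_eq_dim])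

theorem charpoly_coeff_card : A.charpoly.coeff (Fintype.card ι) = 1 := by
  nontriviality R
  rw [← A.charpoly_natDegree_eq_dim, ← leadingCoeff, A.charpoly_monic.leadingCoeff]

theorem coeff_matPolyEquiv_adjugate_charmatrix_eq_mul_succ (k : ℕ) :
    (matPolyEquiv (charmatrix A).adjugate).coeff k =
      A * (matPolyEquiv (charmatrix A).adjugate).coeff (k + 1) +
        A.charpoly.coeff (k + 1) • 1 := by
  have h := congrArg (fun p => coeff (matPolyEquiv p) (k + 1)) (mul_adjugate (charmatrix A))
  simp only [map_mul, matPolyEquiv_charmatrix, matPolyEquiv_smul_one, sub_mul, coeff_sub,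
    coeff_X_mul, coeff_C_mul, coeff_map, Algebra.algebraMap_eq_smul_one] at h
  exact sub_eq_iff_eq_add'.mp h

theorem coeff_matPolyEquiv_adjugate_charmatrix_of_card_le {k : ℕ} (hk : Fintype.card ι ≤ k) :
    (matPolyEquiv (charmatrix A).adjugate).coeff k = 0 := by
  set P := matPolyEquiv (charmatrix A).adjugate
  -- Above the dimension the recurrence has no constant term, and `P` has only finitely many
  -- nonzero coefficients.
  have shift : ∀ m, ∀ k ≥ Fintype.card ι, P.coeff k = A ^ m * P.coeff (k + m) := by
    intro m
    induction m with
    | zero => simp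
    | succ m ih =>
      intro k hk
      rw [coeff_matPolyEquiv_adjugate_charmatrix_eq_mul_succ,
        charpoly_coeff_eq_zero_of_card_lt A (by omega), zero_smul, add_zero,
        ih (k + 1) (by omega), ← Matrix.mul_assoc, ← pow_succ', add_assoc, add_comm 1]
  rw [shift (P.natDegree + 1) k hk, P.coeff_eq_zero_of_natDegree_lt (by omega), Matrix.mul_zero]

theorem coeff_matPolyEquiv_adjugate_charmatrix (k : ℕ) :
    (matPolyEquiv (charmatrix A).adjugate).coeff k =
      ∑ m ∈ Finset.range (Fintype.card ι - k), A.charpoly.coeff (k + 1 + m) • A ^ m := by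
  induction h : Fintype.card ι - k generalizing k with
  | zero => simp [coeff_matPolyEquiv_adjugate_charmatrix_of_card_le A (by omega : _ ≤ k)]
  | succ j ih =>
    rw [coeff_matPolyEquiv_adjugate_charmatrix_eq_mul_succ, ih (k + 1) (by omega),
      Finset.sum_range_succ', Finset.mul_sum]
    simp only [Matrix.mul_smul, ← pow_succ', pow_zero, add_zero]
    congr 1
    refine Finset.sum_congr rfl fun m _ => ?_
    rw [add_assoc (k + 1) 1 m, add_comm 1 m]

end Adjugate

theorem isUnit_of_rank_eq_card {K ι : Type*} [Field K] [Fintype ι] [DecidableEq ι]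
    {M : Matrix ι ι K} (h : M.rank = Fintype.card ι) : IsUnit M := by
  rw [← mulVec_surjective_iff_isUnit, ← Matrix.coe_mulVecLin, ← LinearMap.range_eq_top]
  apply Submodule.eq_top_of_finrank_eq
  rw [Module.finrank_fintype_fun_eq_card, ← h]
  rfl

section Controllability

variable {R : Type*} [CommRing R] {n : ℕ}

noncomputable def controllabilityMatrix (A : Matrix (Fin n) (Fin n) R) (b : Fin n → R) :
    Matrix (Fin n) (Fin n) R :=
  of fun i j => (A ^ (j : ℕ) *ᵥ b) i

noncomputable def charpolyHankel (A : Matrix (Fin n) (Fin n) R) : Matrix (Fin n) (Fin n) R :=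
  of fun m k => A.charpoly.coeff (k + 1 + m)

theorem isUnit_charpolyHankel (A : Matrix (Fin n) (Fin n) R) : IsUnit (charpolyHankel A) := by
  set W : Matrix (Fin n) (Fin n) R := of fun m k => A.charpoly.coeff (n - k + m)
  have hW : W.IsUpperTriangular := fun m k hkm =>
    charpoly_coeff_eq_zero_of_card_lt A (by simp only [Fintype.card_fin, id] at hkm ⊢; omega)
  have hWdiag : ∀ k, W k k = 1 := fun k => by
    simpa [W, Nat.sub_add_cancel k.isLt.le] using charpoly_coeff_card A
  have hrev : charpolyHankel A = W.submatrix id Fin.revPerm := by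
    ext m k
    simp only [charpolyHankel, W, of_apply, submatrix_apply, id_eq, Fin.revPerm_apply, Fin.val_rev]
    congr 1
    omega
  rw [isUnit_iff_isUnit_det, hrev, det_permute', det_of_isUpperTriangular hW]
  simpa [hWdiag] using (Units.isUnit _).map (Int.castRingHom R)

theorem adjugate_charmatrix_coeff_mulVec_eq_controllabilityMatrix_mul
    (A : Matrix (Fin n) (Fin n) R) (b : Fin n → R) :
    (of fun i (k : Fin n) => ((matPolyEquiv (charmatrix A).adjugate).coeff k *ᵥ b) i) =
      controllabilityMatrix A b * charpolyHankel A := by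
  ext i k
  have hsum : ∑ m ∈ Finset.range (n - k), A.charpoly.coeff (k + 1 + m) • A ^ m =
      ∑ m ∈ Finset.range n, A.charpoly.coeff (k + 1 + m) • A ^ m :=
    Finset.sum_subset (Finset.range_subset_range.mpr (Nat.sub_le n k)) fun m _ hm => by
      rw [Finset.mem_range, not_lt] at hm
      rw [charpoly_coeff_eq_zero_of_card_lt A (by rw [Fintype.card_fin]; omega), zero_smul]
  rw [of_apply, coeff_matPolyEquiv_adjugate_charmatrix, Fintype.card_fin, hsum,
    ← Fin.sum_univ_eq_sum_range, sum_mulVec, mul_apply, Finset.sum_apply]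
  refine Finset.sum_congr rfl fun m _ => ?_
  simp only [smul_mulVec, Pi.smul_apply, smul_eq_mul, controllabilityMatrix, charpolyHankel,
    of_apply, mul_comm]

end Controllability

section TransferFunction

variable {R ι : Type*} [CommRing R] [Fintype ι] [DecidableEq ι]

noncomputable def transferNumerator (A : Matrix ι ι R) (b c : ι → R) : R[X] :=
  ∑ i, ∑ j, C (c i) * ((charmatrix A).adjugate i j * C (b j))

theorem coeff_transferNumerator (A : Matrix ι ι R) (b c : ι → R) (k : ℕ) :
    (transferNumerator A b c).coeff k =
      c ⬝ᵥ ((matPolyEquiv (charmatrix A).adjugate).coeff k *ᵥ b) := by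
  simp only [transferNumerator, finsetSum_coeff, coeff_C_mul, coeff_mul_C, dotProduct, mulVec,
    matPolyEquiv_coeff_apply, Finset.mul_sum]

theorem exists_transferNumerator_eq {K : Type*} [Field K] {n : ℕ} {A : Matrix (Fin n) (Fin n) K}
    {b : Fin n → K} (hctrb : (controllabilityMatrix A b).rank = n) {q : K[X]}
    (hq : q.natDegree < n) : ∃ c, transferNumerator A b c = q := by
  have hW := (isUnit_of_rank_eq_card (by rwa [Fintype.card_fin])).mul (isUnit_charpolyHankel A)
  rw [← adjugate_charmatrix_coeff_mulVec_eq_controllabilityMatrix_mul] at hW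
  obtain ⟨c, hc⟩ := vecMul_surjective_iff_isUnit.mpr hW fun k => q.coeff k
  refine ⟨c, Polynomial.ext fun k => ?_⟩
  rw [coeff_transferNumerator]
  by_cases hk : k < n
  · exact congrFun hc ⟨k, hk⟩
  · rw [coeff_matPolyEquiv_adjugate_charmatrix_of_card_le A (by simpa using hk), zero_mulVec,
      dotProduct_zero, coeff_eq_zero_of_natDegree_lt (by omega)]

end TransferFunction

end Matrix

theorem exists_relative_degree_one_minimum_phase_output_general
    {n : ℕ} (hn : 0 < n) (A : Matrix (Fin n) (Fin n) ℝ) (b : Fin n → ℝ)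
    (hctrb : (Matrix.of fun (i j : Fin n) => ((A ^ (j : ℕ)) *ᵥ b) i).rank = n) :
    ∃ c : Fin n → ℝ,
      (∑ i : Fin n, ∑ j : Fin n,
          Polynomial.C (c i) * ((charmatrix A).adjugate i j * Polynomial.C (b j))).degree
        = (n - 1 : ℕ) ∧
      ∀ z : ℂ, (((∑ i : Fin n, ∑ j : Fin n,
          Polynomial.C (c i) * ((charmatrix A).adjugate i j * Polynomial.C (b j)))).map
            (algebraMap ℝ ℂ)).IsRoot z → z.re < 0 := by
  have hmonic : ((X + C 1 : ℝ[X]) ^ (n - 1)).Monic := (monic_X_add_C 1).pow _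
  have hdeg : ((X + C 1 : ℝ[X]) ^ (n - 1)).natDegree = n - 1 := by
    rw [natDegree_pow, natDegree_X_add_C, mul_one]
  obtain ⟨c, hc⟩ := exists_transferNumerator_eq (q := (X + C 1) ^ (n - 1)) hctrb (by omega)
  unfold transferNumerator at hc
  refine ⟨c, ?_, fun z hz => ?_⟩
  · rw [hc, degree_eq_natDegree hmonic.ne_zero, hdeg]
  · simp only [hc, Polynomial.map_pow, Polynomial.map_add, map_X, map_one, IsRoot,
      eval_pow, eval_add, eval_X] at hz
    rw [eq_neg_of_add_eq_zero_left (eq_zero_of_pow_eq_zero hz)]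
    norm_num

/-- For a controllable pair `(A, b)` with `A` Hurwitz, there exists an
output vector `c` such that `c^T (sI − A)⁻¹ b` has relative degree one (its numerator
polynomial `c^T adj(sI − A) b` has degree exactly `n − 1`) and is minimum phase (all
complex roots of the numerator have negative real part). -/
theorem exists_relative_degree_one_minimum_phase_output
    {n : ℕ} (hn : 0 < n) (A : Matrix (Fin n) (Fin n) ℝ) (b : Fin n → ℝ)
    (hHurwitz : ∀ z : ℂ, ((charpoly A).map (algebraMap ℝ ℂ)).IsRoot z → z.re < 0)
    (hctrb : (Matrix.of fun (i j : Fin n) => ((A ^ (j : ℕ)) *ᵥ b) i).rank = n) :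
    ∃ c : Fin n → ℝ,
      (∑ i : Fin n, ∑ j : Fin n,
          Polynomial.C (c i) * ((charmatrix A).adjugate i j * Polynomial.C (b j))).degree
        = (n - 1 : ℕ) ∧
      ∀ z : ℂ, (((∑ i : Fin n, ∑ j : Fin n,
          Polynomial.C (c i) * ((charmatrix A).adjugate i j * Polynomial.C (b j)))).map
            (algebraMap ℝ ℂ)).IsRoot z → z.re < 0 :=
  exists_relative_degree_one_minimum_phase_output_general hn A b hctrb
end
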